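/- arXiv:1907.13092 — 3 statements merged into one kernel-verified Lean document; each statement's English description precedes it below -/
import Mathlib

section
/- Let n and j₀ be integers with 0 ≤ j₀ < n and n - j₀ odd, and let r : ℤ → ℕ be a sequence with r j = 0 for j < j₀ and r j₀ > 0, such that (r j) is strictly increasing on [j₀, n]. Define r' j = 0 for j < j₀ + (n - j₀ + 1)/2, and r' j = r j − r (n - (j - j₀)) for j₀ + (n - j₀ + 1)/2 ≤ j ≤ n. Then r' (j₀ + (n-j₀+1)/2) > 0, the new effective minimum j₀' = j₀ + (n - j₀ + 1)/2 satisfies n - j₀' < n - j₀, and (r' j) is strictly increasing on [j₀', n]. -/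
/-- Inductive step of Theorem 1 (odd case).  Let `0 ≤ j₀ < n` with `n - j₀` odd,
and let `r : ℤ → ℕ` vanish below `j₀`, be nonzero at `j₀`, and be strictly
increasing on `[j₀, n]`.  Define `r' j = 0` for `j < j₀ + (n - j₀ + 1)/2` and
`r' j = r j - r (n - (j - j₀))` for `j₀ + (n - j₀ + 1)/2 ≤ j ≤ n`.  Then
`r'` is positive at the new effective minimum `j₀' = j₀ + (n - j₀ + 1)/2`,
`n - j₀' < n - j₀`, and `r'` is strictly increasing on `[j₀', n]`. -/
theorem stmt_11 (n j₀ : ℤ) (h0 : 0 ≤ j₀) (hlt : j₀ < n) (hodd : Odd (n - j₀))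
    (r : ℤ → ℕ) (hzero : ∀ j < j₀, r j = 0) (hpos : 0 < r j₀)
    (hmono : ∀ ⦃j k : ℤ⦄, j₀ ≤ j → j < k → k ≤ n → r j < r k)
    (r' : ℤ → ℕ)
    (hr'lo : ∀ j, j < j₀ + (n - j₀ + 1) / 2 → r' j = 0)
    (hr'hi : ∀ j, j₀ + (n - j₀ + 1) / 2 ≤ j → j ≤ n →
      r' j = r j - r (n - (j - j₀))) :
    0 < r' (j₀ + (n - j₀ + 1) / 2) ∧
      n - (j₀ + (n - j₀ + 1) / 2) < n - j₀ ∧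
      ∀ ⦃j k : ℤ⦄, j₀ + (n - j₀ + 1) / 2 ≤ j → j < k → k ≤ n → r' j < r' k := by
  obtain ⟨t, ht⟩ := hodd
  set m := (n - j₀ + 1) / 2 with hm
  have hm2 : n - j₀ + 1 = 2 * m := by omega
  have key : ∀ ⦃j : ℤ⦄, j₀ + m ≤ j → j ≤ n → r (n - (j - j₀)) < r j := by
    intro j hj hjn
    exact hmono (by omega) (by omega) hjn
  refine ⟨?_, by omega, ?_⟩
  · rw [hr'hi _ le_rfl (by omega)]
    have := key (j := j₀ + m) le_rfl (by omega)
    omega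
  · intro j k hj hjk hkn
    rw [hr'hi _ hj (by omega), hr'hi _ (by omega) hkn]
    have h1 := key hj (by omega)
    have h2 := key (le_trans hj hjk.le) hkn
    have h3 : r j < r k := hmono (by omega) hjk hkn
    have h4 : r (n - (k - j₀)) ≤ r (n - (j - j₀)) := by
      rcases eq_or_lt_of_le hjk.le with h | h
      · omega
      · exact (hmono (by omega) (by omega) (by omega)).le
    omega
end

section
/- Let n and j₀ be integers with 0 ≤ j₀ < n and n - j₀ even and positive, and let r : ℤ → ℕ satisfy r j = 0 for j < j₀, r j₀ > 0, and (r j) strictly increasing on [j₀, n]. Let m = j₀ + (n - j₀)/2 and l = ⌊r m / 2⌋. Define r' m = r m − 2l and r' j = r j − r (n - (j - j₀)) for m < j ≤ n, and r' j = 0 for j < m. Then: if r m is odd the new effective minimum is m with r' m = 1; if r m is even the new effective minimum is m + 1 with r' (m+1) = r (m+1) − r (m−1) ≥ 2; and in both cases (r' j) is strictly increasing on the interval from the new effective minimum to n. -/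
/-- Inductive step of Theorem 1 (even case).  Let `0 ≤ j₀ < n` with `n - j₀`
even and positive, `r : ℤ → ℕ` vanishing below `j₀`, nonzero at `j₀`, strictly
increasing on `[j₀, n]`.  Put `m = j₀ + (n - j₀)/2` and `l = ⌊r m / 2⌋`, and set
`r' j = 0` for `j < m`, `r' m = r m - 2l`, `r' j = r j - r (n - (j - j₀))` for
`m < j ≤ n`.  Then: if `r m` is odd, the new effective minimum is `m` with
`r' m = 1`; if `r m` is even, the new effective minimum is `m + 1` with
`r' (m+1) = r (m+1) - r (m-1) ≥ 2`; and in both cases `r'` is strictly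
increasing from the new effective minimum up to `n`. -/
theorem stmt_12 (n j₀ : ℤ) (h0 : 0 ≤ j₀) (hlt : j₀ < n) (heven : Even (n - j₀))
    (r : ℤ → ℕ) (hzero : ∀ j < j₀, r j = 0) (hpos : 0 < r j₀)
    (hmono : ∀ ⦃j k : ℤ⦄, j₀ ≤ j → j < k → k ≤ n → r j < r k)
    (m : ℤ) (hm : m = j₀ + (n - j₀) / 2) (l : ℕ) (hl : l = r m / 2)
    (r' : ℤ → ℕ)
    (hr'lo : ∀ j < m, r' j = 0)
    (hr'm : r' m = r m - 2 * l)
    (hr'hi : ∀ j, m < j → j ≤ n → r' j = r j - r (n - (j - j₀))) :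
    (Odd (r m) →
      r' m = 1 ∧ ∀ ⦃j k : ℤ⦄, m ≤ j → j < k → k ≤ n → r' j < r' k) ∧
    (Even (r m) →
      r' m = 0 ∧ r' (m + 1) = r (m + 1) - r (m - 1) ∧ 2 ≤ r' (m + 1) ∧
        ∀ ⦃j k : ℤ⦄, m + 1 ≤ j → j < k → k ≤ n → r' j < r' k) := by
  obtain ⟨c, hc⟩ := heven
  have hc1 : 1 ≤ c := by omega
  have hmval : m = j₀ + c := by omega
  have hn : n = 2 * m - j₀ := by omega
  have hmlo : j₀ + 1 ≤ m := by omega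
  have hmhi : m + 1 ≤ n := by omega
  -- general strict monotonicity above m
  have key : ∀ j k : ℤ, m < j → j < k → k ≤ n → r' j < r' k := by
    intro j k hj hjk hk
    rw [hr'hi j hj (by omega), hr'hi k (by omega) hk]
    have e1 : n - (j - j₀) = 2 * m - j := by omega
    have e2 : n - (k - j₀) = 2 * m - k := by omega
    rw [e1, e2]
    have h1 : r (2 * m - j) < r j := hmono (by omega) (by omega) (by omega)
    have h2 : r (2 * m - k) < r (2 * m - j) := hmono (by omega) (by omega) (by omega)
    have h3 : r j < r k := hmono (by omega) hjk hk
    omega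
  have key2 : ∀ k : ℤ, m < k → k ≤ n → 2 ≤ r' k := by
    intro k hk hkn
    rw [hr'hi k hk hkn]
    have e2 : n - (k - j₀) = 2 * m - k := by omega
    rw [e2]
    have h1 : r (2 * m - k) < r m := hmono (by omega) (by omega) (by omega)
    have h2 : r m < r k := hmono (by omega) hk hkn
    omega
  constructor
  · intro hodd
    obtain ⟨t, ht⟩ := hodd
    have hr'm1 : r' m = 1 := by omega
    refine ⟨hr'm1, ?_⟩
    intro j k hj hjk hk
    rcases eq_or_lt_of_le hj with h | h
    · rw [← h, hr'm1]
      have := key2 k (by omega) hk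
      omega
    · exact key j k h hjk hk
  · intro heven'
    obtain ⟨t, ht⟩ := heven'
    have hr'm0 : r' m = 0 := by omega
    have e : n - (m + 1 - j₀) = m - 1 := by omega
    have hval : r' (m + 1) = r (m + 1) - r (m - 1) := by
      rw [hr'hi (m + 1) (by omega) (by omega), e]
    refine ⟨hr'm0, hval, ?_, ?_⟩
    · have h1 : r (m - 1) < r m := hmono (by omega) (by omega) (by omega)
      have h2 : r m < r (m + 1) := hmono (by omega) (by omega) (by omega)
      omega
    · intro j k hj hjk hk
      exact key j k (by omega) hjk hk
end

section
/- Let n ≥ 1, j₀ with 0 ≤ j₀ < n and n - j₀ odd, and let r : ℤ → ℕ be zero below j₀, nonzero at j₀, strictly increasing on [j₀ + (n-j₀-1)/2, n], and suppose for every j with j₀ ≤ j < j₀ + (n-j₀-1)/2 either r(j+1) ≥ r j, or r(j+1) < r j and r j − r(j+1) < r(n-(j-j₀)) − r(n-(j-j₀+1)). Then for all j in [j₀ + (n-j₀+1)/2, n], r j − r(n - (j - j₀)) > 0, and the sequence j ↦ r j − r(n-(j-j₀)) is strictly increasing on that interval. -/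
/-- Remark 1 (odd case), the weakened hypothesis of Theorem 1.  Let `0 ≤ j₀ < n`
with `n - j₀` odd, and let `r : ℤ → ℕ` vanish below `j₀`, be nonzero at `j₀`,
and be strictly increasing on `[j₀ + (n - j₀ - 1)/2, n]`.  Assume further that for
every `j` with `j₀ ≤ j < j₀ + (n - j₀ - 1)/2`, either `r (j+1) ≥ r j`, or
`r (j+1) < r j` and `r j - r (j+1) < r (n - (j - j₀)) - r (n - (j - j₀ + 1))`.
Then for all `j` in `[j₀ + (n - j₀ + 1)/2, n]` one has `r j - r (n - (j - j₀)) > 0`,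
and `j ↦ r j - r (n - (j - j₀))` is strictly increasing on that interval. -/
theorem stmt_14 (n j₀ : ℤ) (hn : 1 ≤ n) (h0 : 0 ≤ j₀) (hlt : j₀ < n)
    (hodd : Odd (n - j₀))
    (r : ℤ → ℕ) (hzero : ∀ j < j₀, r j = 0) (hpos : r j₀ ≠ 0)
    (hmono : ∀ ⦃j k : ℤ⦄, j₀ + (n - j₀ - 1) / 2 ≤ j → j < k → k ≤ n → r j < r k)
    (hweak : ∀ j, j₀ ≤ j → j < j₀ + (n - j₀ - 1) / 2 →
      r j ≤ r (j + 1) ∨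
        (r (j + 1) < r j ∧
          r j - r (j + 1) < r (n - (j - j₀)) - r (n - (j - j₀ + 1)))) :
    (∀ j, j₀ + (n - j₀ + 1) / 2 ≤ j → j ≤ n → 0 < r j - r (n - (j - j₀))) ∧
      ∀ ⦃j k : ℤ⦄, j₀ + (n - j₀ + 1) / 2 ≤ j → j < k → k ≤ n →
        r j - r (n - (j - j₀)) < r k - r (n - (k - j₀)) := by
  obtain ⟨m, hm⟩ := hodd
  have hm0 : 0 ≤ m := by omega
  have hdiv : (n - j₀ - 1) / 2 = m := by omega
  have hdiv2 : (n - j₀ + 1) / 2 = m + 1 := by omega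
  -- G p = r (mirror p) - r p, for p in the lower half [j₀, j₀ + m]
  set G : ℤ → ℤ := fun p => (r (n - (p - j₀)) : ℤ) - r p with hGdef
  have hstep : ∀ p, j₀ ≤ p → p < j₀ + m → G (p + 1) < G p := by
    intro p hp1 hp2
    have hup : r (n - (p - j₀) - 1) < r (n - (p - j₀)) :=
      hmono (by omega) (by omega) (by omega)
    have e1 : n - (p + 1 - j₀) = n - (p - j₀) - 1 := by ring
    have e2 : n - (p - j₀ + 1) = n - (p - j₀) - 1 := by ring
    rcases hweak p hp1 (by omega) with h | ⟨h1, h2⟩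
    · simp only [hGdef, e1]
      omega
    · rw [e2] at h2
      simp only [hGdef, e1]
      omega
  have hanti0 : ∀ (k : ℕ), ∀ p, j₀ ≤ p → p + (k + 1 : ℕ) ≤ j₀ + m →
      G (p + (k + 1 : ℕ)) < G p := by
    intro k
    induction k with
    | zero => intro p hp1 hp2; simpa using hstep p hp1 (by push_cast at hp2 ⊢; omega)
    | succ k ih =>
        intro p hp1 hp2
        have h1 : G ((p + 1) + (k + 1 : ℕ)) < G (p + 1) :=
          ih (p + 1) (by omega) (by push_cast at hp2 ⊢; omega)
        have h2 : G (p + 1) < G p := hstep p hp1 (by push_cast at hp2; omega)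
        have e : (p + 1) + ((k : ℤ) + 1) = p + ((k : ℤ) + 1 + 1) := by ring
        push_cast at h1 ⊢
        rw [e] at h1
        linarith
  have hanti : ∀ p q, j₀ ≤ p → p < q → q ≤ j₀ + m → G q < G p := by
    intro p q hp hpq hq
    have hk : q = p + ((q - p - 1).toNat + 1 : ℕ) := by
      push_cast; omega
    rw [hk]
    exact hanti0 _ p hp (by rw [← hk]; exact hq)
  have hGpos : ∀ p, j₀ ≤ p → p ≤ j₀ + m → 0 < G p := by
    intro p hp1 hp2
    have hlast : 0 < G (j₀ + m) := by
      have : r (j₀ + m) < r (j₀ + m + 1) := hmono (by omega) (by omega) (by omega)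
      have e : n - (j₀ + m - j₀) = j₀ + m + 1 := by omega
      simp only [hGdef, e]
      omega
    rcases eq_or_lt_of_le hp2 with h | h
    · rw [h]; exact hlast
    · exact lt_trans hlast (hanti p (j₀ + m) hp1 h (le_refl _))
  -- translate: for j in the upper half, r j - r (n - (j - j₀)) corresponds to G (n - (j - j₀))
  have key : ∀ j, j₀ + m + 1 ≤ j → j ≤ n →
      (G (n - (j - j₀)) : ℤ) = (r j : ℤ) - r (n - (j - j₀)) := by
    intro j h1 h2
    have e : n - (n - (j - j₀) - j₀) = j := by ring
    simp only [hGdef, e]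
  constructor
  · intro j h1 h2
    rw [hdiv2] at h1
    have hp : 0 < G (n - (j - j₀)) := hGpos _ (by omega) (by omega)
    rw [key j (by omega) h2] at hp
    omega
  · intro j k h1 h2 h3
    rw [hdiv2] at h1
    have hpj : 0 < G (n - (j - j₀)) := hGpos _ (by omega) (by omega)
    have hpk : 0 < G (n - (k - j₀)) := hGpos _ (by omega) (by omega)
    have hlt2 : G (n - (j - j₀)) < G (n - (k - j₀)) :=
      hanti _ _ (by omega) (by omega) (by omega)
    rw [key j (by omega) (by omega)] at hpj hlt2
    rw [key k (by omega) h3] at hpk hlt2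
    omega
end
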